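/- arXiv:1208.2751 — 3 statements merged into one kernel-verified Lean document; each statement's English description precedes it below -/
import Mathlib

section
/- For every BPP description, every ordinal i, and every relation ∼ among the short-long approximant ≈_i, the long-long approximant ≈_i^L, the Parikh approximant ≈_i^P and the word approximant ≈_i^W: if α ∼ β then αγ ∼ βγ for every process γ (the approximants are congruences with respect to parallel composition, i.e. multiset union). -/
/-- A Basic Parallel Processes description: finitely many variables, finitely many
actions (with a distinguished silent action `tau`) and finitely many rules. -/
structure BPP where
  V : Type
  Act : Type
  finV : Finite V
  finAct : Finite Act
  tau : Act
  T : Set (V × Act × Multiset V)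
  finT : T.Finite

namespace BPP

variable (B : BPP)

/-- Processes are multisets of variables. -/
abbrev Proc (B : BPP) : Type := Multiset B.V

/-- The strong step relation `α →a β`. -/
def Step (a : B.Act) (α β : B.Proc) : Prop :=
  ∃ X γ δ, (X, a, γ) ∈ B.T ∧ α = X ::ₘ δ ∧ β = γ + δ

/-- `α ⇒τ β`: the reflexive–transitive closure of silent steps. -/
def WTau : B.Proc → B.Proc → Prop :=
  Relation.ReflTransGen (B.Step B.tau)

/-- The weak step relation `α ⇒a β`. -/
def WStep (a : B.Act) (α β : B.Proc) : Prop :=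
  (a = B.tau ∧ B.WTau α β) ∨
  (a ≠ B.tau ∧ ∃ γ δ, B.WTau α γ ∧ B.Step a γ δ ∧ B.WTau δ β)

/-- Weak steps along a word `w ∈ Act*`. -/
def WWord : List B.Act → B.Proc → B.Proc → Prop
  | [] => B.WTau
  | a :: w => fun α β => ∃ γ, B.WStep a α γ ∧ WWord w γ β

/-- A weak bisimulation. -/
def IsWeakBisim (R : B.Proc → B.Proc → Prop) : Prop :=
  Symmetric R ∧
    ∀ α β, R α β → ∀ a α', B.Step a α α' → ∃ β', B.WStep a β β' ∧ R α' β'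

/-- Weak bisimilarity `α ≈ β`. -/
def WBisim (α β : B.Proc) : Prop :=
  ∃ R, B.IsWeakBisim R ∧ R α β

/-- Refinement function for the short-long approximants: `Ψ(R)` is the largest
symmetric relation such that every strong attack is answered by a weak step into `R`. -/
def RefSL (R : B.Proc → B.Proc → Prop) (α β : B.Proc) : Prop :=
  (∀ a α', B.Step a α α' → ∃ β', B.WStep a β β' ∧ R α' β') ∧
  (∀ a β', B.Step a β β' → ∃ α', B.WStep a α α' ∧ R α' β')

/-- Refinement function for the long-long approximants: weak attacks, weak responses. -/
def RefLL (R : B.Proc → B.Proc → Prop) (α β : B.Proc) : Prop :=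
  (∀ a α', B.WStep a α α' → ∃ β', B.WStep a β β' ∧ R α' β') ∧
  (∀ a β', B.WStep a β β' → ∃ α', B.WStep a α α' ∧ R α' β')

/-- Refinement function for the word approximants: attacks along words, responses
along the same word. -/
def RefW (R : B.Proc → B.Proc → Prop) (α β : B.Proc) : Prop :=
  (∀ w α', B.WWord w α α' → ∃ β', B.WWord w β β' ∧ R α' β') ∧
  (∀ w β', B.WWord w β β' → ∃ α', B.WWord w α α' ∧ R α' β')

/-- Refinement function for the Parikh approximants: attacks along words, responses
along any word with the same Parikh image (multiset of letters). -/
def RefP (R : B.Proc → B.Proc → Prop) (α β : B.Proc) : Prop :=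
  (∀ w α', B.WWord w α α' →
    ∃ (w' : List B.Act) (β' : B.Proc), (↑w' : Multiset B.Act) = ↑w ∧ B.WWord w' β β' ∧ R α' β') ∧
  (∀ w β', B.WWord w β β' →
    ∃ (w' : List B.Act) (α' : B.Proc), (↑w' : Multiset B.Act) = ↑w ∧ B.WWord w' α α' ∧ R α' β')

/-- Approximants by transfinite recursion: `≈₀` is the full relation,
`≈_{i+1} = Ψ(≈_i)` and `≈_λ = ⋂_{i<λ} ≈_i` at limit ordinals. -/
noncomputable def Approx (F : (B.Proc → B.Proc → Prop) → (B.Proc → B.Proc → Prop))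
    (o : Ordinal) : B.Proc → B.Proc → Prop :=
  Ordinal.limitRecOn o (fun _ _ => True) (fun _ R => F R)
    (fun _ _ ih α β => ∀ i hi, ih i hi α β)

/-- A deadlock: no visible step is possible. -/
def Deadlock (α : B.Proc) : Prop :=
  ∀ a α', B.Step a α α' → a = B.tau

/-- The norm of a process: least length of a word leading weakly to a deadlock
(`⊤ = ∞` if there is none). -/
noncomputable def norm (α : B.Proc) : ℕ∞ :=
  sInf {n : ℕ∞ | ∃ w δ, B.WWord w α δ ∧ B.Deadlock δ ∧ (w.length : ℕ∞) = n}

/-- A normed description: every variable has finite norm. -/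
def Normed : Prop := ∀ X : B.V, B.norm {X} ≠ ⊤

/-- Silent norm-preserving steps `α →₀ β`. -/
def Step0 (α β : B.Proc) : Prop :=
  B.Step B.tau α β ∧ B.norm α = B.norm β

/-- `⇒₀`: reflexive–transitive closure of silent norm-preserving steps. -/
def WTau0 : B.Proc → B.Proc → Prop :=
  Relation.ReflTransGen B.Step0

/-- No two distinct variables are redundant. -/
def NoRedundantVars : Prop :=
  ∀ X Y : B.V, X ≠ Y → ¬ (B.WTau0 {X} {Y} ∧ B.WTau0 {Y} {X})

/-- A generator: a variable that can silently, norm-preservingly reproduce itself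
together with some nonempty rest. -/
def IsGenerator (X : B.V) : Prop :=
  ∃ α : B.Proc, α ≠ 0 ∧ B.WTau0 {X} ({X} + α)

/-- A pure variable cannot vanish along `⇒₀`. -/
def IsPure (X : B.V) : Prop :=
  ∀ α : B.Proc, B.WTau0 {X} α → X ∈ α

end BPP


namespace BPP

variable {B : BPP}

/-! ### Lifting steps by a parallel component -/

lemma step_add_right {a : B.Act} {α α' : B.Proc} (h : B.Step a α α') (γ : B.Proc) :
    B.Step a (α + γ) (α' + γ) := by
  obtain ⟨X, g, d, hT, rfl, rfl⟩ := h
  exact ⟨X, g, d + γ, hT, by rw [Multiset.cons_add], by rw [add_assoc]⟩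

lemma step_add_left {a : B.Act} {γ γ' : B.Proc} (h : B.Step a γ γ') (β : B.Proc) :
    B.Step a (β + γ) (β + γ') := by
  rw [add_comm β γ, add_comm β γ']; exact step_add_right h β

lemma wtau_add_right {α α' : B.Proc} (h : B.WTau α α') (γ : B.Proc) :
    B.WTau (α + γ) (α' + γ) := by
  induction h with
  | refl => exact .refl
  | tail _ hstep ih => exact ih.tail (step_add_right hstep γ)

lemma wtau_add_left {γ γ' : B.Proc} (h : B.WTau γ γ') (β : B.Proc) :
    B.WTau (β + γ) (β + γ') := by
  rw [add_comm β γ, add_comm β γ']; exact wtau_add_right h β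

lemma wtau_add {α α' γ γ' : B.Proc} (h1 : B.WTau α α') (h2 : B.WTau γ γ') :
    B.WTau (α + γ) (α' + γ') :=
  (wtau_add_right h1 γ).trans (wtau_add_left h2 α')

lemma step_wstep {a : B.Act} {α α' : B.Proc} (h : B.Step a α α') : B.WStep a α α' := by
  by_cases ht : a = B.tau
  · subst ht; exact Or.inl ⟨rfl, .single h⟩
  · exact Or.inr ⟨ht, α, α', .refl, h, .refl⟩

lemma wstep_tau {α α' : B.Proc} (h : B.WStep B.tau α α') : B.WTau α α' := by
  rcases h with ⟨_, h⟩ | ⟨hne, _⟩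
  · exact h
  · exact absurd rfl hne

lemma wtau_wstep {a : B.Act} {α β γ : B.Proc} (ht : B.WTau α β) (h : B.WStep a β γ) :
    B.WStep a α γ := by
  rcases h with ⟨rfl, h⟩ | ⟨hne, m, n, h1, h2, h3⟩
  · exact Or.inl ⟨rfl, ht.trans h⟩
  · exact Or.inr ⟨hne, m, n, ht.trans h1, h2, h3⟩

lemma wstep_wtau {a : B.Act} {α β γ : B.Proc} (h : B.WStep a α β) (ht : B.WTau β γ) :
    B.WStep a α γ := by
  rcases h with ⟨rfl, h⟩ | ⟨hne, m, n, h1, h2, h3⟩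
  · exact Or.inl ⟨rfl, h.trans ht⟩
  · exact Or.inr ⟨hne, m, n, h1, h2, h3.trans ht⟩

lemma wstep_add_right {a : B.Act} {α α' : B.Proc} (h : B.WStep a α α') (γ : B.Proc) :
    B.WStep a (α + γ) (α' + γ) := by
  rcases h with ⟨rfl, h⟩ | ⟨hne, m, n, h1, h2, h3⟩
  · exact Or.inl ⟨rfl, wtau_add_right h γ⟩
  · exact Or.inr ⟨hne, m + γ, n + γ, wtau_add_right h1 γ, step_add_right h2 γ,
      wtau_add_right h3 γ⟩

lemma wstep_add_left {a : B.Act} {γ γ' : B.Proc} (h : B.WStep a γ γ') (β : B.Proc) :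
    B.WStep a (β + γ) (β + γ') := by
  rw [add_comm β γ, add_comm β γ']; exact wstep_add_right h β

lemma wtau_wword {w : List B.Act} {α β γ : B.Proc} (ht : B.WTau α β) (h : B.WWord w β γ) :
    B.WWord w α γ := by
  cases w with
  | nil => exact ht.trans h
  | cons a w => obtain ⟨m, h1, h2⟩ := h; exact ⟨m, wtau_wstep ht h1, h2⟩

/-! ### Decomposing steps of a parallel composition -/

lemma step_split {a : B.Act} {α γ δ : B.Proc} (h : B.Step a (α + γ) δ) :
    (∃ α', B.Step a α α' ∧ δ = α' + γ) ∨ (∃ γ', B.Step a γ γ' ∧ δ = α + γ') := by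
  obtain ⟨X, g, d, hT, he, rfl⟩ := h
  have hX : X ∈ α + γ := by rw [he]; exact Multiset.mem_cons_self X d
  rcases Multiset.mem_add.1 hX with hX | hX
  · obtain ⟨t, rfl⟩ := Multiset.exists_cons_of_mem hX
    left
    refine ⟨g + t, ⟨X, g, t, hT, rfl, rfl⟩, ?_⟩
    have hd : d = t + γ := by
      rw [← Multiset.cons_inj_right X, ← Multiset.cons_add, ← he]
    rw [hd, add_assoc]
  · obtain ⟨t, rfl⟩ := Multiset.exists_cons_of_mem hX
    right
    refine ⟨g + t, ⟨X, g, t, hT, rfl, rfl⟩, ?_⟩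
    have hd : d = α + t := by
      rw [← Multiset.cons_inj_right X, ← Multiset.add_cons, ← he]
    rw [hd, ← add_assoc, add_comm g α, add_assoc]

lemma wtau_split : ∀ {s δ : B.Proc}, B.WTau s δ → ∀ α γ : B.Proc, s = α + γ →
    ∃ α' γ', B.WTau α α' ∧ B.WTau γ γ' ∧ δ = α' + γ' := by
  intro s δ h
  induction h using Relation.ReflTransGen.head_induction_on with
  | refl => exact fun α γ h => ⟨α, γ, .refl, .refl, h⟩
  | head hstep _ ih =>
    rintro α γ rfl
    rcases step_split hstep with ⟨α₁, h1, rfl⟩ | ⟨γ₁, h1, rfl⟩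
    · obtain ⟨α', γ', ha, hg, rfl⟩ := ih α₁ γ rfl
      exact ⟨α', γ', Relation.ReflTransGen.head h1 ha, hg, rfl⟩
    · obtain ⟨α', γ', ha, hg, rfl⟩ := ih α γ₁ rfl
      exact ⟨α', γ', ha, Relation.ReflTransGen.head h1 hg, rfl⟩

lemma wstep_split {a : B.Act} {α γ δ : B.Proc} (h : B.WStep a (α + γ) δ) :
    ∃ α' γ', δ = α' + γ' ∧
      ((B.WStep a α α' ∧ B.WTau γ γ') ∨ (B.WTau α α' ∧ B.WStep a γ γ')) := by
  rcases h with ⟨rfl, h⟩ | ⟨hne, m, n, h1, h2, h3⟩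
  · obtain ⟨α', γ', ha, hg, rfl⟩ := wtau_split h α γ rfl
    exact ⟨α', γ', rfl, Or.inl ⟨Or.inl ⟨rfl, ha⟩, hg⟩⟩
  · obtain ⟨α₁, γ₁, ha1, hg1, rfl⟩ := wtau_split h1 α γ rfl
    rcases step_split h2 with ⟨α₂, hs, rfl⟩ | ⟨γ₂, hs, rfl⟩
    · obtain ⟨α', γ', ha2, hg2, rfl⟩ := wtau_split h3 α₂ γ₁ rfl
      exact ⟨α', γ', rfl, Or.inl ⟨Or.inr ⟨hne, α₁, α₂, ha1, hs, ha2⟩, hg1.trans hg2⟩⟩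
    · obtain ⟨α', γ', ha2, hg2, rfl⟩ := wtau_split h3 α₁ γ₂ rfl
      exact ⟨α', γ', rfl, Or.inr ⟨ha1.trans ha2, Or.inr ⟨hne, γ₁, γ₂, hg1, hs, hg2⟩⟩⟩

/-! ### Shuffles of words -/

inductive Shuffle {A : Type _} : List A → List A → List A → Prop
  | nil : Shuffle [] [] []
  | left (a : A) {u v w : List A} : Shuffle u v w → Shuffle (a :: u) v (a :: w)
  | right (a : A) {u v w : List A} : Shuffle u v w → Shuffle u (a :: v) (a :: w)

lemma shuffle_nil_left {A : Type _} : ∀ v : List A, Shuffle [] v v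
  | [] => .nil
  | a :: v => .right a (shuffle_nil_left v)

lemma shuffle_append {A : Type _} : ∀ u v : List A, Shuffle u v (u ++ v)
  | [], v => shuffle_nil_left v
  | a :: u, v => .left a (shuffle_append u v)

lemma Shuffle.parikh {A : Type _} {u v w : List A} (h : Shuffle u v w) :
    (↑u + ↑v : Multiset A) = ↑w := by
  induction h with
  | nil => rfl
  | left a _ ih => rw [← Multiset.cons_coe, ← Multiset.cons_coe, Multiset.cons_add, ih]
  | right a _ ih => rw [← Multiset.cons_coe, ← Multiset.cons_coe, Multiset.add_cons, ih]

lemma wword_split : ∀ {w : List B.Act} {α γ δ : B.Proc}, B.WWord w (α + γ) δ →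
    ∃ u v α' γ', Shuffle u v w ∧ B.WWord u α α' ∧ B.WWord v γ γ' ∧ δ = α' + γ'
  | [], α, γ, δ, h => by
    obtain ⟨α', γ', ha, hg, rfl⟩ := wtau_split h α γ rfl
    exact ⟨[], [], α', γ', .nil, ha, hg, rfl⟩
  | a :: w, α, γ, δ, h => by
    obtain ⟨m, h1, h2⟩ := h
    obtain ⟨α₁, γ₁, rfl, hc⟩ := wstep_split h1
    obtain ⟨u, v, α', γ', hsh, hu, hv, rfl⟩ := wword_split h2
    rcases hc with ⟨hs, ht⟩ | ⟨ht, hs⟩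
    · exact ⟨a :: u, v, α', γ', .left a hsh, ⟨α₁, hs, hu⟩, wtau_wword ht hv, rfl⟩
    · exact ⟨u, a :: v, α', γ', .right a hsh, wtau_wword ht hu, ⟨γ₁, hs, hv⟩, rfl⟩

lemma shuffle_replay {u v w : List B.Act} (hsh : Shuffle u v w) :
    ∀ {β β' γ γ' : B.Proc}, B.WWord u β β' → B.WWord v γ γ' →
      B.WWord w (β + γ) (β' + γ') := by
  induction hsh with
  | nil => exact fun hb hg => wtau_add hb hg
  | left a _ ih =>
    intro β β' γ γ' hb hg
    obtain ⟨m, h1, h2⟩ := hb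
    exact ⟨m + γ, wstep_add_right h1 γ, ih h2 hg⟩
  | right a _ ih =>
    intro β β' γ γ' hb hg
    obtain ⟨m, h1, h2⟩ := hg
    exact ⟨β + m, wstep_add_left h1 β, ih hb h2⟩

/-! ### Approximants: basic lemmas -/

lemma approx_zero {F : (B.Proc → B.Proc → Prop) → (B.Proc → B.Proc → Prop)}
    {α β : B.Proc} : B.Approx F 0 α β := by
  unfold BPP.Approx
  rw [Ordinal.limitRecOn_zero]
  trivial

lemma approx_succ {F : (B.Proc → B.Proc → Prop) → (B.Proc → B.Proc → Prop)}
    {i : Ordinal} {α β : B.Proc} :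
    B.Approx F (Order.succ i) α β ↔ F (B.Approx F i) α β := by
  unfold BPP.Approx
  rw [Ordinal.limitRecOn_succ]

lemma approx_limit {F : (B.Proc → B.Proc → Prop) → (B.Proc → B.Proc → Prop)}
    {i : Ordinal} (hi : Order.IsSuccLimit i) {α β : B.Proc} :
    B.Approx F i α β ↔ ∀ j < i, B.Approx F j α β := by
  unfold BPP.Approx
  rw [Ordinal.limitRecOn_limit _ _ _ _ hi]

/-- Monotonicity of a refinement function. -/
def MonoF (B : BPP) (F : (B.Proc → B.Proc → Prop) → (B.Proc → B.Proc → Prop)) : Prop :=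
  ∀ R S : B.Proc → B.Proc → Prop, (∀ a b, R a b → S a b) → ∀ a b, F R a b → F S a b

lemma approx_succ_le {F : (B.Proc → B.Proc → Prop) → (B.Proc → B.Proc → Prop)}
    (hF : B.MonoF F) : ∀ (i : Ordinal) (a b : B.Proc),
      B.Approx F (Order.succ i) a b → B.Approx F i a b := by
  intro i
  induction i using Ordinal.induction with
  | _ i IH =>
    rcases Ordinal.zero_or_succ_or_isSuccLimit i with rfl | ⟨j, rfl⟩ | hi
    · exact fun a b _ => approx_zero
    · intro a b h
      rw [approx_succ] at h ⊢
      exact hF _ _ (IH j (Order.lt_succ j)) a b h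
    · intro a b h
      rw [approx_succ] at h
      rw [approx_limit hi]
      intro j hj
      have h1 : ∀ a b, B.Approx F i a b → B.Approx F j a b := fun a b hab =>
        (approx_limit hi).1 hab j hj
      exact IH j hj a b (approx_succ.2 (hF _ _ h1 a b h))

lemma approx_antitone {F : (B.Proc → B.Proc → Prop) → (B.Proc → B.Proc → Prop)}
    (hF : B.MonoF F) : ∀ (i j : Ordinal), j ≤ i → ∀ a b : B.Proc,
      B.Approx F i a b → B.Approx F j a b := by
  intro i
  induction i using Ordinal.induction with
  | _ i IH =>
    intro j hj a b h
    rcases eq_or_lt_of_le hj with rfl | hj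
    · exact h
    rcases Ordinal.zero_or_succ_or_isSuccLimit i with rfl | ⟨k, rfl⟩ | hi
    · exact absurd hj (not_lt_zero (a := j))
    · exact IH k (Order.lt_succ k) j (Order.lt_succ_iff.1 hj) a b
        (approx_succ_le hF k a b h)
    · exact (approx_limit hi).1 h j hj

/-- The main transfinite induction for congruence. -/
lemma approx_congr {F : (B.Proc → B.Proc → Prop) → (B.Proc → B.Proc → Prop)}
    (hF : B.MonoF F)
    (hsucc : ∀ R : B.Proc → B.Proc → Prop,
      (∀ a b c, R a b → R (a + c) (b + c)) →
      ∀ α β γ : B.Proc, F R α β → R α β → F R (α + γ) (β + γ)) :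
    ∀ (i : Ordinal) (α β γ : B.Proc), B.Approx F i α β → B.Approx F i (α + γ) (β + γ) := by
  intro i
  induction i using Ordinal.induction with
  | _ i IH =>
    intro α β γ h
    rcases Ordinal.zero_or_succ_or_isSuccLimit i with rfl | ⟨k, rfl⟩ | hi
    · exact approx_zero
    · rw [approx_succ] at h ⊢
      exact hsucc (B.Approx F k) (fun a b c => IH k (Order.lt_succ k) a b c) α β γ h
        (approx_succ_le hF k α β (approx_succ.2 h))
    · rw [approx_limit hi] at h ⊢
      exact fun j hj => IH j hj α β γ (h j hj)

/-! ### Monotonicity of the four refinement functions -/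

lemma mono_refSL : B.MonoF B.RefSL := by
  rintro R S hRS α β ⟨h1, h2⟩
  refine ⟨fun a α' hs => ?_, fun a β' hs => ?_⟩
  · obtain ⟨β', hw, hr⟩ := h1 a α' hs; exact ⟨β', hw, hRS _ _ hr⟩
  · obtain ⟨α', hw, hr⟩ := h2 a β' hs; exact ⟨α', hw, hRS _ _ hr⟩

lemma mono_refLL : B.MonoF B.RefLL := by
  rintro R S hRS α β ⟨h1, h2⟩
  refine ⟨fun a α' hs => ?_, fun a β' hs => ?_⟩
  · obtain ⟨β', hw, hr⟩ := h1 a α' hs; exact ⟨β', hw, hRS _ _ hr⟩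
  · obtain ⟨α', hw, hr⟩ := h2 a β' hs; exact ⟨α', hw, hRS _ _ hr⟩

lemma mono_refW : B.MonoF B.RefW := by
  rintro R S hRS α β ⟨h1, h2⟩
  refine ⟨fun w α' hs => ?_, fun w β' hs => ?_⟩
  · obtain ⟨β', hw, hr⟩ := h1 w α' hs; exact ⟨β', hw, hRS _ _ hr⟩
  · obtain ⟨α', hw, hr⟩ := h2 w β' hs; exact ⟨α', hw, hRS _ _ hr⟩

lemma mono_refP : B.MonoF B.RefP := by
  rintro R S hRS α β ⟨h1, h2⟩
  refine ⟨fun w α' hs => ?_, fun w β' hs => ?_⟩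
  · obtain ⟨w', β', hp, hw, hr⟩ := h1 w α' hs; exact ⟨w', β', hp, hw, hRS _ _ hr⟩
  · obtain ⟨w', α', hp, hw, hr⟩ := h2 w β' hs; exact ⟨w', α', hp, hw, hRS _ _ hr⟩

/-! ### Successor step for each refinement function -/

lemma refSL_succ (R : B.Proc → B.Proc → Prop)
    (hcong : ∀ a b c, R a b → R (a + c) (b + c)) (α β γ : B.Proc)
    (h : B.RefSL R α β) (hR : R α β) : B.RefSL R (α + γ) (β + γ) := by
  refine ⟨fun a δ hs => ?_, fun a δ hs => ?_⟩
  · rcases step_split hs with ⟨α', hα, rfl⟩ | ⟨γ', hγ, rfl⟩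
    · obtain ⟨β', hw, hr⟩ := h.1 a α' hα
      exact ⟨β' + γ, wstep_add_right hw γ, hcong _ _ _ hr⟩
    · exact ⟨β + γ', step_wstep (step_add_left hγ β), hcong _ _ _ hR⟩
  · rcases step_split hs with ⟨β', hβ, rfl⟩ | ⟨γ', hγ, rfl⟩
    · obtain ⟨α', hw, hr⟩ := h.2 a β' hβ
      exact ⟨α' + γ, wstep_add_right hw γ, hcong _ _ _ hr⟩
    · exact ⟨α + γ', step_wstep (step_add_left hγ α), hcong _ _ _ hR⟩

lemma refLL_succ (R : B.Proc → B.Proc → Prop)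
    (hcong : ∀ a b c, R a b → R (a + c) (b + c)) (α β γ : B.Proc)
    (h : B.RefLL R α β) (_hR : R α β) : B.RefLL R (α + γ) (β + γ) := by
  refine ⟨fun a δ hs => ?_, fun a δ hs => ?_⟩
  · obtain ⟨α', γ', rfl, hc⟩ := wstep_split hs
    rcases hc with ⟨hw, ht⟩ | ⟨ht, hw⟩
    · obtain ⟨β', hwb, hr⟩ := h.1 a α' hw
      exact ⟨β' + γ', wstep_wtau (wstep_add_right hwb γ) (wtau_add_left ht β'),
        hcong _ _ _ hr⟩
    · obtain ⟨β', hwb, hr⟩ := h.1 B.tau α' (Or.inl ⟨rfl, ht⟩)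
      exact ⟨β' + γ', wtau_wstep (wtau_add_right (wstep_tau hwb) γ) (wstep_add_left hw β'),
        hcong _ _ _ hr⟩
  · obtain ⟨β', γ', rfl, hc⟩ := wstep_split hs
    rcases hc with ⟨hw, ht⟩ | ⟨ht, hw⟩
    · obtain ⟨α', hwa, hr⟩ := h.2 a β' hw
      exact ⟨α' + γ', wstep_wtau (wstep_add_right hwa γ) (wtau_add_left ht α'),
        hcong _ _ _ hr⟩
    · obtain ⟨α', hwa, hr⟩ := h.2 B.tau β' (Or.inl ⟨rfl, ht⟩)
      exact ⟨α' + γ', wtau_wstep (wtau_add_right (wstep_tau hwa) γ) (wstep_add_left hw α'),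
        hcong _ _ _ hr⟩

lemma refW_succ (R : B.Proc → B.Proc → Prop)
    (hcong : ∀ a b c, R a b → R (a + c) (b + c)) (α β γ : B.Proc)
    (h : B.RefW R α β) (_hR : R α β) : B.RefW R (α + γ) (β + γ) := by
  refine ⟨fun w δ hs => ?_, fun w δ hs => ?_⟩
  · obtain ⟨u, v, α', γ', hsh, hu, hv, rfl⟩ := wword_split hs
    obtain ⟨β', hwb, hr⟩ := h.1 u α' hu
    exact ⟨β' + γ', shuffle_replay hsh hwb hv, hcong _ _ _ hr⟩
  · obtain ⟨u, v, β', γ', hsh, hu, hv, rfl⟩ := wword_split hs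
    obtain ⟨α', hwa, hr⟩ := h.2 u β' hu
    exact ⟨α' + γ', shuffle_replay hsh hwa hv, hcong _ _ _ hr⟩

lemma refP_succ (R : B.Proc → B.Proc → Prop)
    (hcong : ∀ a b c, R a b → R (a + c) (b + c)) (α β γ : B.Proc)
    (h : B.RefP R α β) (_hR : R α β) : B.RefP R (α + γ) (β + γ) := by
  refine ⟨fun w δ hs => ?_, fun w δ hs => ?_⟩
  · obtain ⟨u, v, α', γ', hsh, hu, hv, rfl⟩ := wword_split hs
    obtain ⟨u', β', hp, hwb, hr⟩ := h.1 u α' hu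
    refine ⟨u' ++ v, β' + γ', ?_, shuffle_replay (shuffle_append u' v) hwb hv,
      hcong _ _ _ hr⟩
    rw [← (shuffle_append u' v).parikh, hp, hsh.parikh]
  · obtain ⟨u, v, β', γ', hsh, hu, hv, rfl⟩ := wword_split hs
    obtain ⟨u', α', hp, hwa, hr⟩ := h.2 u β' hu
    refine ⟨u' ++ v, α' + γ', ?_, shuffle_replay (shuffle_append u' v) hwa hv,
      hcong _ _ _ hr⟩
    rw [← (shuffle_append u' v).parikh, hp, hsh.parikh]

end BPP

/-- all four approximants are congruences with respect to parallel
composition (multiset union). -/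
theorem approximants_congruence (B : BPP) (i : Ordinal) (α β γ : B.Proc) :
    (B.Approx B.RefSL i α β → B.Approx B.RefSL i (α + γ) (β + γ)) ∧
    (B.Approx B.RefLL i α β → B.Approx B.RefLL i (α + γ) (β + γ)) ∧
    (B.Approx B.RefP i α β → B.Approx B.RefP i (α + γ) (β + γ)) ∧
    (B.Approx B.RefW i α β → B.Approx B.RefW i (α + γ) (β + γ)) := by
  refine ⟨?_, ?_, ?_, ?_⟩
  · exact fun h => BPP.approx_congr B.mono_refSL BPP.refSL_succ i α β γ h
  · exact fun h => BPP.approx_congr B.mono_refLL BPP.refLL_succ i α β γ h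
  · exact fun h => BPP.approx_congr B.mono_refP BPP.refP_succ i α β γ h
  · exact fun h => BPP.approx_congr B.mono_refW BPP.refW_succ i α β γ h
end

section
/- For every BPP description with exactly one visible action (Act = {τ, a}) in which no variable has norm 0 (every variable has positive or infinite norm), weak bisimilarity coincides with the Parikh approximant at level ω: ≈ = ≈^P_ω. -/
namespace BPPProofs

open BPP

variable {B : BPP}

/-! ### Basic step lemmas -/

lemma step_wstep {c : B.Act} {α β : B.Proc} (h : B.Step c α β) : B.WStep c α β := by
  by_cases hc : c = B.tau
  · exact Or.inl ⟨hc, Relation.ReflTransGen.single (hc ▸ h)⟩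
  · exact Or.inr ⟨hc, α, β, Relation.ReflTransGen.refl, h, Relation.ReflTransGen.refl⟩

lemma wstep_tau {α β : B.Proc} (h : B.WStep B.tau α β) : B.WTau α β := by
  rcases h with ⟨_, h⟩ | ⟨hne, _⟩
  · exact h
  · exact absurd rfl hne

lemma wtau_wstep {c : B.Act} {α β γ : B.Proc} (h1 : B.WTau α β) (h2 : B.WStep c β γ) :
    B.WStep c α γ := by
  rcases h2 with ⟨he, ht⟩ | ⟨hne, γ', δ', t1, s, t2⟩
  · exact Or.inl ⟨he, h1.trans ht⟩
  · exact Or.inr ⟨hne, γ', δ', h1.trans t1, s, t2⟩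

lemma wstep_wtau {c : B.Act} {α β γ : B.Proc} (h1 : B.WStep c α β) (h2 : B.WTau β γ) :
    B.WStep c α γ := by
  rcases h1 with ⟨he, ht⟩ | ⟨hne, γ', δ', t1, s, t2⟩
  · exact Or.inl ⟨he, ht.trans h2⟩
  · exact Or.inr ⟨hne, γ', δ', t1, s, t2.trans h2⟩

lemma wtau_wword {w : List B.Act} {α β γ : B.Proc} (h1 : B.WTau α β) (h2 : B.WWord w β γ) :
    B.WWord w α γ := by
  cases w with
  | nil => exact h1.trans h2
  | cons c w =>
    obtain ⟨ρ, hs, hw⟩ := h2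
    exact ⟨ρ, wtau_wstep h1 hs, hw⟩

lemma wword_append {w w' : List B.Act} {α β γ : B.Proc} (h1 : B.WWord w α β)
    (h2 : B.WWord w' β γ) : B.WWord (w ++ w') α γ := by
  induction w generalizing α with
  | nil => exact wtau_wword h1 h2
  | cons c w ih =>
    obtain ⟨ρ, hs, hw⟩ := h1
    exact ⟨ρ, hs, ih hw⟩

lemma wstep_wword_single {c : B.Act} {α β : B.Proc} (h : B.WStep c α β) : B.WWord [c] α β :=
  ⟨β, h, Relation.ReflTransGen.refl⟩

lemma wword_single_wstep {c : B.Act} {α β : B.Proc} (h : B.WWord [c] α β) : B.WStep c α β := by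
  obtain ⟨ρ, hs, ht⟩ := h
  exact wstep_wtau hs ht

lemma not_step_zero {c : B.Act} {β : B.Proc} : ¬ B.Step c 0 β := by
  rintro ⟨X, γ, δ, _, h, _⟩
  exact Multiset.cons_ne_zero h.symm

lemma deadlock_zero : B.Deadlock 0 := fun _ _ h => absurd h not_step_zero

lemma wtau_zero {β : B.Proc} (h : B.WTau 0 β) : β = 0 := by
  rcases h.cases_head with rfl | ⟨γ, hs, _⟩
  · rfl
  · exact absurd hs not_step_zero

/-! ### Norm lemmas -/

lemma norm_le {w : List B.Act} {α δ : B.Proc} (h : B.WWord w α δ) (hd : B.Deadlock δ) :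
    B.norm α ≤ (w.length : ℕ∞) :=
  sInf_le ⟨w, δ, h, hd, rfl⟩

lemma norm_of_deadlock {α : B.Proc} (hd : B.Deadlock α) : B.norm α = 0 := by
  have h0 : B.norm α ≤ 0 := by
    exact_mod_cast norm_le (w := []) (Relation.ReflTransGen.refl) hd
  exact le_antisymm h0 (zero_le)

lemma norm_witness {α : B.Proc} (h : B.norm α ≠ ⊤) :
    ∃ w δ, B.WWord w α δ ∧ B.Deadlock δ ∧ (w.length : ℕ∞) ≤ B.norm α := by
  have hlt : B.norm α < B.norm α + 1 := (ENat.lt_add_one_iff h).mpr le_rfl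
  have hlt' : sInf {n : ℕ∞ | ∃ w δ, B.WWord w α δ ∧ B.Deadlock δ ∧ (w.length : ℕ∞) = n}
      < B.norm α + 1 := hlt
  obtain ⟨s, hs, hslt⟩ := sInf_lt_iff.mp hlt'
  obtain ⟨w, δ, hw, hd, he⟩ := hs
  exact ⟨w, δ, hw, hd, by rw [he]; exact (ENat.lt_add_one_iff h).mp hslt⟩

lemma norm_ne_top_wword {w : List B.Act} {α β : B.Proc} (h : B.WWord w α β)
    (hβ : B.norm β ≠ ⊤) : B.norm α ≠ ⊤ := by
  obtain ⟨w', δ, h1, h2, _⟩ := norm_witness hβ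
  have := norm_le (wword_append h h1) h2
  exact ((this.trans_lt (ENat.coe_lt_top _)).ne)

lemma norm_top_wword {w : List B.Act} {α β : B.Proc} (h : B.WWord w α β)
    (hα : B.norm α = ⊤) : B.norm β = ⊤ := by
  by_contra hβ
  exact (norm_ne_top_wword h hβ) hα

/-! ### Consequences of `hz` -/

section HZ

variable (hz : ∀ X : B.V, B.norm {X} ≠ 0)

include hz

lemma deadlock_eq_zero {δ : B.Proc} (hd : B.Deadlock δ) : δ = 0 := by
  by_contra h0
  obtain ⟨X, hX⟩ := Multiset.exists_mem_of_ne_zero h0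
  haveI : DecidableEq B.V := Classical.decEq _
  have hdX : B.Deadlock {X} := by
    intro b α' hs
    obtain ⟨X₀, γ, θ, hT, h1, h2⟩ := hs
    obtain ⟨hXe, rfl⟩ := (Multiset.singleton_eq_cons_iff _).mp h1
    subst hXe
    exact hd b (γ + δ.erase X) ⟨X, γ, δ.erase X, hT, (Multiset.cons_erase hX).symm, rfl⟩
  exact hz X (norm_of_deadlock hdX)

lemma no_tau_zero_rule {X : B.V} (h : (X, B.tau, (0 : B.Proc)) ∈ B.T) : False := by
  have hs : B.Step B.tau {X} 0 := ⟨X, 0, 0, h, by simp, by simp⟩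
  have hw : B.WWord [] {X} (0 : B.Proc) := Relation.ReflTransGen.single hs
  have h0 : B.norm {X} ≤ 0 := by exact_mod_cast norm_le hw deadlock_zero
  exact hz X (le_antisymm h0 (zero_le))

lemma card_le_step_tau {α β : B.Proc} (h : B.Step B.tau α β) :
    Multiset.card α ≤ Multiset.card β := by
  obtain ⟨X, γ, δ, hT, rfl, rfl⟩ := h
  have hγ : γ ≠ 0 := fun h0 => no_tau_zero_rule hz (h0 ▸ hT)
  have h1 : 1 ≤ Multiset.card γ := Multiset.card_pos.mpr hγ
  simp only [Multiset.card_cons, Multiset.card_add]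
  omega

lemma card_le_wtau {α β : B.Proc} (h : B.WTau α β) :
    Multiset.card α ≤ Multiset.card β := by
  induction h with
  | refl => exact le_rfl
  | tail _ hstep ih => exact le_trans ih (card_le_step_tau hz hstep)

lemma card_le_wstep {c : B.Act} {α β : B.Proc} (h : B.WStep c α β) :
    Multiset.card α ≤ Multiset.card β + 1 := by
  rcases h with ⟨_, ht⟩ | ⟨_, γ, δ, t1, s, t2⟩
  · exact le_trans (card_le_wtau hz ht) (Nat.le_succ _)
  · obtain ⟨X, ρ, θ, hT, rfl, rfl⟩ := s
    have h1 := card_le_wtau hz t1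
    have h2 := card_le_wtau hz t2
    simp only [Multiset.card_cons, Multiset.card_add] at *
    omega

lemma card_le_wword {w : List B.Act} {α β : B.Proc} (h : B.WWord w α β) :
    Multiset.card α ≤ Multiset.card β + w.length := by
  induction w generalizing α with
  | nil => simpa using card_le_wtau hz h
  | cons c w ih =>
    obtain ⟨ρ, hs, hw⟩ := h
    have := card_le_wstep hz hs
    have := ih hw
    simp only [List.length_cons]
    omega

lemma card_le_of_norm {α : B.Proc} {m : ℕ} (h : B.norm α = (m : ℕ∞)) :
    Multiset.card α ≤ m := by
  obtain ⟨w, δ, hw, hd, hle⟩ := norm_witness (α := α) (by rw [h]; exact ENat.coe_ne_top m)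
  have hδ : δ = 0 := deadlock_eq_zero hz hd
  subst hδ
  have h1 := card_le_wword hz hw
  rw [h] at hle
  have h2 : w.length ≤ m := by exact_mod_cast hle
  simp only [Multiset.card_zero, Nat.zero_add] at h1
  omega

/-! ### Norm invariance under two refinement rounds -/

lemma norm_le_of_refP2 {R : B.Proc → B.Proc → Prop} {α β : B.Proc}
    (h : B.RefP (B.RefP R) α β) : B.norm β ≤ B.norm α := by
  by_cases hα : B.norm α = ⊤
  · rw [hα]; exact le_top
  obtain ⟨w, δ, hw, hd, hle⟩ := norm_witness hα
  obtain ⟨w', δ', hP, hw', hRp⟩ := h.1 w δ hw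
  have hδ : δ = 0 := deadlock_eq_zero hz hd
  subst hδ
  have hd' : B.Deadlock δ' := by
    intro b δ'' hs
    by_contra hb
    have hwb : B.WWord [b] δ' δ'' := wstep_wword_single (step_wstep hs)
    obtain ⟨w₃, θ', hP3, hw3, _⟩ := hRp.2 [b] δ'' hwb
    have hw3' : w₃ = [b] := by
      rw [Multiset.coe_singleton] at hP3
      exact Multiset.coe_eq_singleton.mp hP3
    subst hw3'
    rcases wword_single_wstep hw3 with ⟨he, _⟩ | ⟨_, γ₁, δ₁, t1, s, _⟩
    · exact hb he
    · rw [wtau_zero t1] at s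
      exact not_step_zero s
  have hlen : w'.length = w.length := by
    have := congrArg Multiset.card hP
    simpa [Multiset.coe_card] using this
  calc B.norm β ≤ (w'.length : ℕ∞) := norm_le hw' hd'
    _ = (w.length : ℕ∞) := by rw [hlen]
    _ ≤ B.norm α := hle

end HZ

/-! ### Approximants, nat-indexed -/

def _root_.BPP.ApproxN (B : BPP) (F : (B.Proc → B.Proc → Prop) → (B.Proc → B.Proc → Prop)) :
    ℕ → B.Proc → B.Proc → Prop
  | 0 => fun _ _ => True
  | n + 1 => F (BPP.ApproxN B F n)

lemma approxN_succ (F : (B.Proc → B.Proc → Prop) → (B.Proc → B.Proc → Prop)) (n : ℕ) :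
    B.ApproxN F (n + 1) = F (B.ApproxN F n) := rfl

lemma approx_nat_eq (F : (B.Proc → B.Proc → Prop) → (B.Proc → B.Proc → Prop)) (n : ℕ) :
    B.Approx F (n : Ordinal) = B.ApproxN F n := by
  induction n with
  | zero =>
    rw [Nat.cast_zero]
    exact Ordinal.limitRecOn_zero _ _ _
  | succ n ih =>
    rw [Nat.cast_succ, Ordinal.add_one_eq_succ, BPP.Approx, Ordinal.limitRecOn_succ]
    show F (B.Approx F (n : Ordinal)) = _
    rw [ih]
    rfl

lemma approx_omega_iff (F : (B.Proc → B.Proc → Prop) → (B.Proc → B.Proc → Prop))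
    {α β : B.Proc} : B.Approx F Ordinal.omega0 α β ↔ ∀ n : ℕ, B.ApproxN F n α β := by
  rw [BPP.Approx, Ordinal.limitRecOn_limit _ _ _ _ Ordinal.isSuccLimit_omega0]
  constructor
  · intro h n
    have h' : B.Approx F (n : Ordinal) α β := h (n : Ordinal) (Ordinal.nat_lt_omega0 n)
    rwa [approx_nat_eq] at h'
  · intro h i hi
    obtain ⟨n, rfl⟩ := Ordinal.lt_omega0.mp hi
    show B.Approx F (n : Ordinal) α β
    rw [approx_nat_eq]
    exact h n

lemma refP_mono {R R' : B.Proc → B.Proc → Prop} (hm : ∀ x y, R x y → R' x y)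
    {α β : B.Proc} (h : B.RefP R α β) : B.RefP R' α β := by
  refine ⟨fun w x' hw => ?_, fun w y' hw => ?_⟩
  · obtain ⟨w', y', hP, hwy, hr⟩ := h.1 w x' hw
    exact ⟨w', y', hP, hwy, hm _ _ hr⟩
  · obtain ⟨w', x', hP, hwx, hr⟩ := h.2 w y' hw
    exact ⟨w', x', hP, hwx, hm _ _ hr⟩

lemma approxN_mono (n : ℕ) {α β : B.Proc} (h : B.ApproxN B.RefP (n + 1) α β) :
    B.ApproxN B.RefP n α β := by
  induction n generalizing α β with
  | zero => trivial
  | succ n ih => exact refP_mono (fun x y => ih) h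

lemma approxN_le {k n : ℕ} (hkn : k ≤ n) {α β : B.Proc} (h : B.ApproxN B.RefP n α β) :
    B.ApproxN B.RefP k α β := by
  induction n with
  | zero => obtain rfl := Nat.le_zero.mp hkn; exact h
  | succ n ih =>
    rcases Nat.lt_or_ge k (n + 1) with hlt | hge
    · exact ih (Nat.lt_succ_iff.mp hlt) (approxN_mono n h)
    · rw [Nat.le_antisymm hkn hge]; exact h

lemma approxN_symm (n : ℕ) {α β : B.Proc} (h : B.ApproxN B.RefP n α β) :
    B.ApproxN B.RefP n β α := by
  induction n generalizing α β with
  | zero => trivial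
  | succ n ih =>
    refine ⟨fun w b' hw => ?_, fun w a' hw => ?_⟩
    · obtain ⟨w', a', hP, hwa, hr⟩ := h.2 w b' hw
      exact ⟨w', a', hP, hwa, ih hr⟩
    · obtain ⟨w', b', hP, hwb, hr⟩ := h.1 w a' hw
      exact ⟨w', b', hP, hwb, ih hr⟩

lemma norm_eq_of_approxN2 (hz : ∀ X : B.V, B.norm {X} ≠ 0) {α β : B.Proc}
    (h : B.ApproxN B.RefP 2 α β) : B.norm α = B.norm β := by
  have h1 : B.RefP (B.RefP (B.ApproxN B.RefP 0)) α β := h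
  have h2 : B.RefP (B.RefP (B.ApproxN B.RefP 0)) β α := approxN_symm 2 h
  exact le_antisymm (norm_le_of_refP2 hz h2) (norm_le_of_refP2 hz h1)

/-! ### The infinite-norm world (uses `ha` and `hz`) -/

section TOP

variable (ha : ∃ a : B.Act, a ≠ B.tau ∧ ∀ b : B.Act, b = B.tau ∨ b = a)
variable (hz : ∀ X : B.V, B.norm {X} ≠ 0)

lemma not_deadlock_of_norm_top {γ : B.Proc} (h : B.norm γ = ⊤) : ¬ B.Deadlock γ := by
  intro hd
  rw [norm_of_deadlock hd] at h
  exact (ENat.top_ne_zero h.symm)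

include ha in
lemma exists_vis_wstep {γ : B.Proc} {c : B.Act} (h : B.norm γ = ⊤) (hc : c ≠ B.tau) :
    ∃ γ', B.WStep c γ γ' ∧ B.norm γ' = ⊤ := by
  have hnd := not_deadlock_of_norm_top h
  simp only [BPP.Deadlock, not_forall] at hnd
  obtain ⟨b, γ', hs, hb⟩ := hnd
  obtain ⟨a, hat, hall⟩ := ha
  have hba : b = a := (hall b).resolve_left hb
  have hca : c = a := (hall c).resolve_left hc
  have hcb : c = b := hca.trans hba.symm
  refine ⟨γ', step_wstep (hcb ▸ hs), ?_⟩
  by_contra h'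
  exact (norm_ne_top_wword (wstep_wword_single (step_wstep hs)) h') h

include ha in
lemma exists_wword_top {δ : B.Proc} (h : B.norm δ = ⊤) (w : List B.Act) :
    ∃ δ', B.WWord w δ δ' ∧ B.norm δ' = ⊤ := by
  induction w generalizing δ with
  | nil => exact ⟨δ, Relation.ReflTransGen.refl, h⟩
  | cons c w ih =>
    by_cases hc : c = B.tau
    · obtain ⟨δ', hw, hδ'⟩ := ih h
      exact ⟨δ', ⟨δ, Or.inl ⟨hc, Relation.ReflTransGen.refl⟩, hw⟩, hδ'⟩
    · obtain ⟨δ₀, hs, h₀⟩ := exists_vis_wstep ha h hc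
      obtain ⟨δ', hw, hδ'⟩ := ih h₀
      exact ⟨δ', ⟨δ₀, hs, hw⟩, hδ'⟩

include ha in
lemma approxN_of_norm_top (n : ℕ) {γ δ : B.Proc} (hγ : B.norm γ = ⊤) (hδ : B.norm δ = ⊤) :
    B.ApproxN B.RefP n γ δ := by
  induction n generalizing γ δ with
  | zero => trivial
  | succ n ih =>
    refine ⟨fun w γ' hw => ?_, fun w δ' hw => ?_⟩
    · obtain ⟨δ', hwδ, hδ'⟩ := exists_wword_top ha hδ w
      exact ⟨w, δ', rfl, hwδ, ih (norm_top_wword hw hγ) hδ'⟩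
    · obtain ⟨γ', hwγ, hγ'⟩ := exists_wword_top ha hγ w
      exact ⟨w, γ', rfl, hwγ, ih hγ' (norm_top_wword hw hδ)⟩

end TOP

/-! ### Weak bisimilarity refines every approximant -/

section LIFT

variable {R : B.Proc → B.Proc → Prop} (hR : B.IsWeakBisim R)

include hR

lemma lift_wtau {α β α' : B.Proc} (h : R α β) (ht : B.WTau α α') :
    ∃ β', B.WTau β β' ∧ R α' β' := by
  induction ht with
  | refl => exact ⟨β, Relation.ReflTransGen.refl, h⟩
  | tail _ hstep ih =>
    obtain ⟨β₁, ht1, hr1⟩ := ih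
    obtain ⟨β₂, hs2, hr2⟩ := hR.2 _ _ hr1 B.tau _ hstep
    exact ⟨β₂, ht1.trans (wstep_tau hs2), hr2⟩

lemma lift_wstep {c : B.Act} {α β α' : B.Proc} (h : R α β) (hs : B.WStep c α α') :
    ∃ β', B.WStep c β β' ∧ R α' β' := by
  rcases hs with ⟨he, ht⟩ | ⟨hne, γ, δ, t1, s, t2⟩
  · obtain ⟨β', ht', hr⟩ := lift_wtau hR h ht
    exact ⟨β', Or.inl ⟨he, ht'⟩, hr⟩
  · obtain ⟨β₁, ht1, hr1⟩ := lift_wtau hR h t1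
    obtain ⟨β₂, hs2, hr2⟩ := hR.2 _ _ hr1 c _ s
    obtain ⟨β₃, ht3, hr3⟩ := lift_wtau hR hr2 t2
    exact ⟨β₃, wtau_wstep ht1 (wstep_wtau hs2 ht3), hr3⟩

lemma lift_wword {w : List B.Act} {α β α' : B.Proc} (h : R α β) (hw : B.WWord w α α') :
    ∃ β', B.WWord w β β' ∧ R α' β' := by
  induction w generalizing α β with
  | nil => exact lift_wtau hR h hw
  | cons c w ih =>
    obtain ⟨γ, hs, hw'⟩ := hw
    obtain ⟨δ, hsδ, hrδ⟩ := lift_wstep hR h hs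
    obtain ⟨β', hwβ, hrβ⟩ := ih hrδ hw'
    exact ⟨β', ⟨δ, hsδ, hwβ⟩, hrβ⟩

end LIFT

lemma wbisim_approxN (n : ℕ) {α β : B.Proc} (h : B.WBisim α β) : B.ApproxN B.RefP n α β := by
  induction n generalizing α β with
  | zero => trivial
  | succ n ih =>
    obtain ⟨R, hR, hr⟩ := h
    refine ⟨fun w α' hw => ?_, fun w β' hw => ?_⟩
    · obtain ⟨β', hwβ, hrβ⟩ := lift_wword hR hr hw
      exact ⟨w, β', rfl, hwβ, ih ⟨R, hR, hrβ⟩⟩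
    · obtain ⟨α', hwα, hrα⟩ := lift_wword hR (hR.1 hr) hw
      exact ⟨w, α', rfl, hwα, approxN_symm n (ih ⟨R, hR, hrα⟩)⟩

/-! ### The approximant at `ω` is a weak bisimulation -/

section MAIN

variable (ha : ∃ a : B.Act, a ≠ B.tau ∧ ∀ b : B.Act, b = B.tau ∨ b = a)
variable (hz : ∀ X : B.V, B.norm {X} ≠ 0)

include ha hz in
lemma key_response {α β α' : B.Proc} {c : B.Act}
    (hn : ∀ n : ℕ, B.ApproxN B.RefP n α β) (hstep : B.Step c α α') :
    ∃ β', B.WStep c β β' ∧ ∀ n : ℕ, B.ApproxN B.RefP n α' β' := by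
  have key : ∀ n : ℕ, ∃ β', B.WStep c β β' ∧ B.ApproxN B.RefP (n + 2) α' β' := by
    intro n
    have h3 : B.RefP (B.ApproxN B.RefP (n + 2)) α β := hn (n + 3)
    obtain ⟨w', β', hP, hw', hr⟩ := h3.1 [c] α' (wstep_wword_single (step_wstep hstep))
    have hw'e : w' = [c] := by
      rw [Multiset.coe_singleton] at hP
      exact Multiset.coe_eq_singleton.mp hP
    subst hw'e
    exact ⟨β', wword_single_wstep hw', hr⟩
  by_cases htop : B.norm α' = ⊤
  · obtain ⟨β', hs, h2⟩ := key 0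
    have hβ' : B.norm β' = ⊤ := by
      rw [← norm_eq_of_approxN2 hz h2]; exact htop
    exact ⟨β', hs, fun n => approxN_of_norm_top ha n htop hβ'⟩
  · obtain ⟨m, hm⟩ := WithTop.ne_top_iff_exists.mp htop
    haveI := B.finV
    haveI : DecidableEq B.V := Classical.decEq _
    choose g hg1 hg2 using key
    have hcard : ∀ n, Multiset.card (g n) ≤ m := by
      intro n
      have h2 : B.ApproxN B.RefP 2 α' (g n) := approxN_le (by omega) (hg2 n)
      have : B.norm (g n) = (m : ℕ∞) := by
        rw [← norm_eq_of_approxN2 hz h2]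
        exact hm.symm
      exact card_le_of_norm hz this
    let f : ℕ → (B.V → Fin (m + 1)) := fun n v =>
      ⟨(g n).count v, Nat.lt_succ_of_le (le_trans (Multiset.count_le_card v (g n)) (hcard n))⟩
    obtain ⟨y, hy⟩ := Finite.exists_infinite_fiber f
    have hyI : (f ⁻¹' {y}).Infinite := Set.infinite_coe_iff.mp hy
    obtain ⟨n₀, hn₀, _⟩ := hyI.exists_gt 0
    have hgeq : ∀ n ∈ f ⁻¹' {y}, g n = g n₀ := by
      intro n hn
      refine Multiset.ext.mpr fun v => ?_
      have h1 : f n = f n₀ := by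
        rw [Set.mem_preimage, Set.mem_singleton_iff] at hn hn₀
        rw [hn, hn₀]
      exact congrArg Fin.val (congrFun h1 v)
    refine ⟨g n₀, hg1 n₀, fun k => ?_⟩
    obtain ⟨n, hnI, hnk⟩ := hyI.exists_gt k
    have := hg2 n
    rw [hgeq n hnI] at this
    exact approxN_le (by omega) this

end MAIN

end BPPProofs


/-- for BPP descriptions with exactly one visible action and no
variable of norm `0`, `≈ = ≈ᴾ_ω`. -/
theorem one_visible_action_P_omega (B : BPP)
    (ha : ∃ a : B.Act, a ≠ B.tau ∧ ∀ b : B.Act, b = B.tau ∨ b = a)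
    (hz : ∀ X : B.V, B.norm {X} ≠ 0) (α β : B.Proc) :
    B.WBisim α β ↔ B.Approx B.RefP Ordinal.omega0 α β := by
  haveI := B.finV
  rw [BPPProofs.approx_omega_iff]
  constructor
  · intro h n
    exact BPPProofs.wbisim_approxN n h
  · intro h
    refine ⟨fun x y => ∀ n : ℕ, B.ApproxN B.RefP n x y, ⟨fun x y hxy n =>
      BPPProofs.approxN_symm n (hxy n), fun x y hxy c x' hs => ?_⟩, h⟩
    obtain ⟨y', hsy, hy⟩ := BPPProofs.key_response ha hz hxy hs
    exact ⟨y', hsy, hy⟩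
end

section
/- In every BPP description with exactly one visible action (Act = {τ, a}), any two processes of infinite norm are weakly bisimilar. -/
namespace BPP

variable (B : BPP)

lemma norm_eq_top_iff (α : B.Proc) :
    B.norm α = ⊤ ↔ ¬ ∃ w δ, B.WWord w α δ ∧ B.Deadlock δ := by
  constructor
  · intro h ⟨w, δ, hw, hd⟩
    have hmem : (w.length : ℕ∞) ∈
        {n : ℕ∞ | ∃ w δ, B.WWord w α δ ∧ B.Deadlock δ ∧ (w.length : ℕ∞) = n} :=
      ⟨w, δ, hw, hd, rfl⟩
    have := sInf_le hmem
    rw [norm] at h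
    rw [h] at this
    simp at this
  · intro h
    rw [norm]
    have : {n : ℕ∞ | ∃ w δ, B.WWord w α δ ∧ B.Deadlock δ ∧ (w.length : ℕ∞) = n} = ∅ := by
      ext n
      simp only [Set.mem_setOf_eq, Set.mem_empty_iff_false, iff_false]
      rintro ⟨w, δ, hw, hd, -⟩
      exact h ⟨w, δ, hw, hd⟩
    rw [this, sInf_empty]

lemma wstep_tau_head {α α' γ : B.Proc} {b : B.Act}
    (h : B.Step B.tau α α') (hw : B.WStep b α' γ) : B.WStep b α γ := by
  rcases hw with ⟨hb, ht⟩ | ⟨hb, γ', δ', h1, h2, h3⟩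
  · exact Or.inl ⟨hb, Relation.ReflTransGen.head h ht⟩
  · exact Or.inr ⟨hb, γ', δ', Relation.ReflTransGen.head h h1, h2, h3⟩

lemma wword_tau_head {α α' δ : B.Proc} {w : List B.Act}
    (h : B.Step B.tau α α') (hw : B.WWord w α' δ) : B.WWord w α δ := by
  cases w with
  | nil => exact Relation.ReflTransGen.head h hw
  | cons b w =>
    obtain ⟨γ, h1, h2⟩ := hw
    exact ⟨γ, B.wstep_tau_head h h1, h2⟩

/-- A strong step from an infinite-norm process leads to an infinite-norm process. -/
lemma step_infinite_norm {α α' : B.Proc} {x : B.Act}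
    (hα : B.norm α = ⊤) (h : B.Step x α α') : B.norm α' = ⊤ := by
  rw [norm_eq_top_iff] at hα ⊢
  rintro ⟨w, δ, hw, hd⟩
  by_cases hx : x = B.tau
  · subst hx
    exact hα ⟨w, δ, B.wword_tau_head h hw, hd⟩
  · exact hα ⟨x :: w, δ,
      ⟨α', Or.inr ⟨hx, α, α', Relation.ReflTransGen.refl, h, Relation.ReflTransGen.refl⟩, hw⟩, hd⟩

/-- An infinite-norm process has a visible step. -/
lemma infinite_norm_visible {β : B.Proc} (hβ : B.norm β = ⊤) :
    ∃ x β', B.Step x β β' ∧ x ≠ B.tau := by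
  by_contra h
  push_neg at h
  have hd : B.Deadlock β := by
    intro x β' hs
    by_contra hx
    exact hx (h x β' hs)
  rw [norm_eq_top_iff] at hβ
  exact hβ ⟨[], β, Relation.ReflTransGen.refl, hd⟩

end BPP

/-- with exactly one visible action, any two processes of infinite
norm are weakly bisimilar. -/
theorem infinite_norm_bisimilar (B : BPP)
    (ha : ∃ a : B.Act, a ≠ B.tau ∧ ∀ b : B.Act, b = B.tau ∨ b = a)
    (α β : B.Proc) (hα : B.norm α = ⊤) (hβ : B.norm β = ⊤) :
    B.WBisim α β := by
  obtain ⟨a, hane, hall⟩ := ha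
  refine ⟨fun α β => B.norm α = ⊤ ∧ B.norm β = ⊤, ⟨?_, ?_⟩, hα, hβ⟩
  · intro γ δ ⟨h1, h2⟩; exact ⟨h2, h1⟩
  · rintro γ δ ⟨hγ, hδ⟩ x γ' hstep
    have hγ' : B.norm γ' = ⊤ := B.step_infinite_norm hγ hstep
    by_cases hx : x = B.tau
    · exact ⟨δ, Or.inl ⟨hx, Relation.ReflTransGen.refl⟩, hγ', hδ⟩
    · -- x must be a; δ can do an a-step
      obtain ⟨y, δ', hs, hy⟩ := B.infinite_norm_visible hδ
      have hxy : x = y := by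
        rcases hall x with h | h
        · exact absurd h hx
        · rcases hall y with h' | h'
          · exact absurd h' hy
          · rw [h, h']
      subst hxy
      exact ⟨δ', Or.inr ⟨hx, δ, δ', Relation.ReflTransGen.refl, hs, Relation.ReflTransGen.refl⟩,
        hγ', B.step_infinite_norm hδ hs⟩
end
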